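/- Let s > 0 and k* ∈ (1/2, Φ(s)). Define f : (0, ∞) → ℝ by f(ρ) = 1 − ∫₀¹ Φ((2ρx − ρ − s²)/s) dx, where Φ is the standard normal CDF. Then f is continuous and strictly decreasing on (0, ∞), lim_{ρ→0⁺} f(ρ) = Φ(s), lim_{ρ→∞} f(ρ) = 1/2, and hence there exists a unique ρ* > 0 with f(ρ*) = k*. -/

import Mathlib

/-!
Write `I(ρ) = ∫₀¹ Φ((2ρx − ρ − s²)/s) dx`, so that `f = 1 − I`. Pairing `x` with `1 − x` gives
`2 I(ρ) = ∫₀¹ F(ρ(2x − 1)/s) dx` with `F(u) = Φ(u − s) + Φ(−u − s)`. `F` is even and, since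
`F'(u) = φ(u − s) − φ(u + s) > 0` for `u > 0`, strictly increasing on `[0, ∞)`; hence `I` is
strictly increasing on `[0, ∞)`. Also `I(0) = Φ(−s) = 1 − Φ(s)`, and as `ρ → ∞` the integrand
tends to `F(±∞) = 1` for every `x ≠ 1/2`, so `2 I(ρ) → 1` by dominated convergence. The
intermediate value theorem then gives `ρ*`, and strict monotonicity its uniqueness.
-/

/-- The standard normal cumulative distribution function. -/
noncomputable def Phi (x : ℝ) : ℝ :=
  ∫ t in Set.Iic x, ProbabilityTheory.gaussianPDFReal 0 1 t

open MeasureTheory ProbabilityTheory Set Filter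
open scoped Topology

lemma gaussianPDFReal_zero_one_neg (x : ℝ) :
    gaussianPDFReal 0 1 (-x) = gaussianPDFReal 0 1 x := by
  simp [gaussianPDFReal]

lemma gaussianPDFReal_zero_one_lt_of_sq_lt {a b : ℝ} (h : a ^ 2 < b ^ 2) :
    gaussianPDFReal 0 1 b < gaussianPDFReal 0 1 a := by
  simp only [gaussianPDFReal, NNReal.coe_one, mul_one, sub_zero]
  gcongr

lemma Phi_eq_cdf (x : ℝ) : Phi x = cdf (gaussianReal 0 1) x := by
  rw [cdf_eq_real, measureReal_def, gaussianReal_apply_eq_integral 0 one_ne_zero (Iic x),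
    ENNReal.toReal_ofReal (setIntegral_nonneg measurableSet_Iic fun t _ ↦
      gaussianPDFReal_nonneg 0 1 t)]
  rfl

lemma Phi_nonneg (x : ℝ) : 0 ≤ Phi x := Phi_eq_cdf x ▸ cdf_nonneg _ _

lemma Phi_le_one (x : ℝ) : Phi x ≤ 1 := Phi_eq_cdf x ▸ cdf_le_one _ _

lemma tendsto_Phi_atTop : Tendsto Phi atTop (𝓝 1) :=
  funext Phi_eq_cdf ▸ tendsto_cdf_atTop _

lemma tendsto_Phi_atBot : Tendsto Phi atBot (𝓝 0) :=
  funext Phi_eq_cdf ▸ tendsto_cdf_atBot _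

lemma Phi_sub_Phi (a b : ℝ) : Phi b - Phi a = ∫ t in a..b, gaussianPDFReal 0 1 t := by
  rw [← intervalIntegral.integral_Iic_sub_Iic (integrable_gaussianPDFReal 0 1).integrableOn
    (integrable_gaussianPDFReal 0 1).integrableOn, Phi, Phi]

lemma hasDerivAt_Phi (x : ℝ) : HasDerivAt Phi (gaussianPDFReal 0 1 x) x := by
  have hcont : Continuous (gaussianPDFReal 0 1) := by unfold gaussianPDFReal; fun_prop
  have hPhi : ∀ y, Phi 0 + ∫ t in (0 : ℝ)..y, gaussianPDFReal 0 1 t = Phi y := fun y ↦ by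
    rw [← Phi_sub_Phi]; ring
  refine ((intervalIntegral.integral_hasDerivAt_right
    ((integrable_gaussianPDFReal 0 1).intervalIntegrable (a := 0))
    (hcont.stronglyMeasurableAtFilter _ _) hcont.continuousAt).const_add (Phi 0)).congr_of_eventuallyEq ?_
  exact .of_forall fun y ↦ (hPhi y).symm

lemma continuous_Phi : Continuous Phi :=
  continuous_iff_continuousAt.2 fun x ↦ (hasDerivAt_Phi x).continuousAt

lemma Phi_neg (x : ℝ) : Phi (-x) = 1 - Phi x := by
  have hsplit := integral_add_compl (measurableSet_Iic (a := x)) (integrable_gaussianPDFReal 0 1)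
  rw [compl_Iic, integral_gaussianPDFReal_eq_one 0 one_ne_zero] at hsplit
  have hrefl : Phi (-x) = ∫ t in Ioi x, gaussianPDFReal 0 1 t := by
    calc Phi (-x) = ∫ t in Iic (-x), gaussianPDFReal 0 1 (-t) := by
          simp only [Phi, gaussianPDFReal_zero_one_neg]
      _ = _ := by rw [integral_comp_neg_Iic, neg_neg]
  rw [hrefl, ← hsplit, Phi]
  ring

noncomputable def foldPhi (s u : ℝ) : ℝ := Phi (u - s) + Phi (-u - s)

lemma foldPhi_neg (s u : ℝ) : foldPhi s (-u) = foldPhi s u := by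
  rw [foldPhi, foldPhi, neg_neg, add_comm]

lemma foldPhi_abs (s u : ℝ) : foldPhi s |u| = foldPhi s u := by
  rcases abs_choice u with h | h <;> rw [h]
  exact foldPhi_neg s u

lemma continuous_foldPhi (s : ℝ) : Continuous (foldPhi s) :=
  (continuous_Phi.comp (by fun_prop)).add (continuous_Phi.comp (by fun_prop))

lemma norm_foldPhi_le (s u : ℝ) : ‖foldPhi s u‖ ≤ 2 := by
  rw [foldPhi, Real.norm_of_nonneg (add_nonneg (Phi_nonneg _) (Phi_nonneg _))]
  linarith [Phi_le_one (u - s), Phi_le_one (-u - s)]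

lemma hasDerivAt_foldPhi (s u : ℝ) :
    HasDerivAt (foldPhi s) (gaussianPDFReal 0 1 (u - s) - gaussianPDFReal 0 1 (u + s)) u := by
  have hleft := (hasDerivAt_Phi (u - s)).comp u ((hasDerivAt_id u).sub_const s)
  have hright := (hasDerivAt_Phi (-u - s)).comp u ((hasDerivAt_id u).neg.sub_const s)
  rw [show -u - s = -(u + s) by ring, gaussianPDFReal_zero_one_neg] at hright
  exact (hleft.add hright).congr_deriv (by ring)

/-- For `u > 0`, `u - s` is closer to `0` than `u + s`, so the derivative is positive. -/
lemma strictMonoOn_foldPhi {s : ℝ} (hs : 0 < s) : StrictMonoOn (foldPhi s) (Ici 0) := by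
  refine strictMonoOn_of_deriv_pos (convex_Ici 0) (continuous_foldPhi s).continuousOn
    fun u hu ↦ ?_
  rw [interior_Ici, mem_Ioi] at hu
  rw [(hasDerivAt_foldPhi s u).deriv, sub_pos]
  exact gaussianPDFReal_zero_one_lt_of_sq_lt (by nlinarith)

lemma foldPhi_lt_foldPhi_of_abs_lt {s u v : ℝ} (hs : 0 < s) (h : |u| < |v|) :
    foldPhi s u < foldPhi s v := by
  rw [← foldPhi_abs s u, ← foldPhi_abs s v]
  exact strictMonoOn_foldPhi hs (abs_nonneg u) (abs_nonneg v) h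

lemma foldPhi_le_foldPhi_of_abs_le {s u v : ℝ} (hs : 0 < s) (h : |u| ≤ |v|) :
    foldPhi s u ≤ foldPhi s v := by
  rw [← foldPhi_abs s u, ← foldPhi_abs s v]
  exact (strictMonoOn_foldPhi hs).monotoneOn (abs_nonneg u) (abs_nonneg v) h

lemma tendsto_foldPhi_cocompact (s : ℝ) : Tendsto (foldPhi s) (cocompact ℝ) (𝓝 1) := by
  have htop : Tendsto (foldPhi s) atTop (𝓝 1) := by
    have hleft := tendsto_Phi_atTop.comp (tendsto_atTop_add_const_right _ (-s) tendsto_id)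
    have hright :=
      tendsto_Phi_atBot.comp (tendsto_atBot_add_const_right _ (-s) tendsto_neg_atTop_atBot)
    rw [← add_zero (1 : ℝ)]
    exact (hleft.add hright).congr fun u ↦ by simp [foldPhi, sub_eq_add_neg]
  have hbot : Tendsto (foldPhi s) atBot (𝓝 1) := by
    simpa [Function.comp_def, foldPhi_neg] using htop.comp tendsto_neg_atBot_atTop
  rw [cocompact_eq_atBot_atTop]
  exact hbot.sup htop

noncomputable def linearRuleIntegral (s ρ : ℝ) : ℝ :=
  ∫ x in (0 : ℝ)..1, Phi ((2 * ρ * x - ρ - s ^ 2) / s)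

lemma continuous_linearRuleIntegral (s : ℝ) : Continuous (linearRuleIntegral s) := by
  apply intervalIntegral.continuous_parametric_intervalIntegral_of_continuous'
  exact continuous_Phi.comp (by fun_prop)

lemma linearRuleIntegral_zero {s : ℝ} (hs : s ≠ 0) : linearRuleIntegral s 0 = 1 - Phi s := by
  have hconst : ∀ x : ℝ, (2 * 0 * x - 0 - s ^ 2) / s = -s := fun x ↦ by field_simp; ring
  simp only [linearRuleIntegral, hconst, Phi_neg, intervalIntegral.integral_const]
  simp

lemma two_mul_linearRuleIntegral {s : ℝ} (hs : s ≠ 0) (ρ : ℝ) :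
    2 * linearRuleIntegral s ρ = ∫ x in (0 : ℝ)..1, foldPhi s (ρ * ((2 * x - 1) / s)) := by
  set g : ℝ → ℝ := fun x ↦ Phi ((2 * ρ * x - ρ - s ^ 2) / s)
  have hg : Continuous g := continuous_Phi.comp (by fun_prop)
  have hg' : Continuous fun x ↦ g (1 - x) := hg.comp (by fun_prop)
  have hreflect : ∫ x in (0 : ℝ)..1, g (1 - x) = linearRuleIntegral s ρ := by
    simp [intervalIntegral.integral_comp_sub_left g 1, linearRuleIntegral, g]
  have hfold : ∀ x, g x + g (1 - x) = foldPhi s (ρ * ((2 * x - 1) / s)) := fun x ↦ by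
    simp only [g, foldPhi]
    congr 2
    · field_simp
    · field_simp; ring
  calc 2 * linearRuleIntegral s ρ = (∫ x in (0 : ℝ)..1, g x) + ∫ x in (0 : ℝ)..1, g (1 - x) := by
        rw [hreflect, linearRuleIntegral]; ring
    _ = _ := by
        rw [← intervalIntegral.integral_add (hg.intervalIntegrable 0 1)
          (hg'.intervalIntegrable 0 1)]
        simp only [hfold]

lemma strictMonoOn_linearRuleIntegral {s : ℝ} (hs : 0 < s) :
    StrictMonoOn (linearRuleIntegral s) (Ici 0) := by
  intro ρ₁ hρ₁ ρ₂ _ hlt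
  have habs : ∀ c : ℝ, |ρ₁ * c| ≤ |ρ₂ * c| := fun c ↦ by
    rw [abs_mul, abs_mul, abs_of_nonneg hρ₁, abs_of_nonneg (hρ₁.out.trans hlt.le)]
    exact mul_le_mul_of_nonneg_right hlt.le (abs_nonneg c)
  have hcont : ∀ ρ, ContinuousOn (fun x : ℝ ↦ foldPhi s (ρ * ((2 * x - 1) / s))) (Icc 0 1) :=
    fun ρ ↦ ((continuous_foldPhi s).comp (by fun_prop)).continuousOn
  suffices h : 2 * linearRuleIntegral s ρ₁ < 2 * linearRuleIntegral s ρ₂ by linarith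
  rw [two_mul_linearRuleIntegral hs.ne', two_mul_linearRuleIntegral hs.ne']
  refine intervalIntegral.integral_lt_integral_of_continuousOn_of_le_of_exists_lt one_pos
    (hcont ρ₁) (hcont ρ₂) (fun x _ ↦ foldPhi_le_foldPhi_of_abs_le hs (habs _))
    ⟨1, right_mem_Icc.2 zero_le_one, foldPhi_lt_foldPhi_of_abs_lt hs ?_⟩
  have hc : 0 < |(2 * 1 - 1) / s| := by positivity
  rw [abs_mul, abs_mul, abs_of_nonneg hρ₁, abs_of_nonneg (hρ₁.out.trans hlt.le)]
  exact mul_lt_mul_of_pos_right hlt hc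

lemma tendsto_linearRuleIntegral_atTop {s : ℝ} (hs : s ≠ 0) :
    Tendsto (linearRuleIntegral s) atTop (𝓝 (1 / 2)) := by
  suffices h : Tendsto (fun ρ ↦ 2 * linearRuleIntegral s ρ) atTop (𝓝 1) by
    have h' := h.const_mul (1 / 2)
    rw [mul_one] at h'
    exact h'.congr fun ρ ↦ by ring
  simp_rw [two_mul_linearRuleIntegral hs]
  suffices h : Tendsto (fun ρ ↦ ∫ x in (0 : ℝ)..1, foldPhi s (ρ * ((2 * x - 1) / s))) atTop
      (𝓝 (∫ _ in (0 : ℝ)..1, (1 : ℝ))) by simpa using h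
  refine intervalIntegral.tendsto_integral_filter_of_dominated_convergence (fun _ ↦ 2)
    (.of_forall fun ρ ↦ ((continuous_foldPhi s).comp (by fun_prop)).aestronglyMeasurable)
    (.of_forall fun ρ ↦ ae_of_all _ fun x _ ↦ norm_foldPhi_le s _) intervalIntegrable_const ?_
  have hhalf : ∀ᵐ x : ℝ, x ≠ 1 / 2 := by simp [ae_iff]
  filter_upwards [hhalf] with x hx _
  have hc : (2 * x - 1) / s ≠ 0 := div_ne_zero (fun h ↦ hx (by linarith)) hs
  have hscale : Tendsto (fun ρ : ℝ ↦ ρ * ((2 * x - 1) / s)) atTop (cocompact ℝ) := by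
    rw [← (Homeomorph.mulRight₀ _ hc).map_cocompact]
    exact tendsto_map.mono_left atTop_le_cocompact
  exact (tendsto_foldPhi_cocompact s).comp hscale

lemma StrictAntiOn.existsUnique_eq_of_tendsto_Ioi {f : ℝ → ℝ} {a l m k : ℝ}
    (hcont : ContinuousOn f (Ioi a)) (hanti : StrictAntiOn f (Ioi a))
    (hleft : Tendsto f (𝓝[>] a) (𝓝 l)) (hright : Tendsto f atTop (𝓝 m))
    (hmk : m < k) (hkl : k < l) : ∃! x, a < x ∧ f x = k := by
  obtain ⟨b, hbk, hab⟩ :=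
    ((hleft.eventually (eventually_gt_nhds hkl)).and self_mem_nhdsWithin).exists
  obtain ⟨c, hck, hbc⟩ :=
    ((hright.eventually (eventually_lt_nhds hmk)).and (eventually_gt_atTop b)).exists
  obtain ⟨x, hx, hfx⟩ := intermediate_value_Icc' hbc.le
    (hcont.mono fun y hy ↦ lt_of_lt_of_le hab hy.1) ⟨hck.le, hbk.le⟩
  have hax : a < x := lt_of_lt_of_le hab hx.1
  exact ⟨x, ⟨hax, hfx⟩, fun y ⟨hay, hfy⟩ ↦ hanti.injOn hay hax (hfy.trans hfx.symm)⟩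

/-- the acceptance probability `f(ρ) = 1 − ∫₀¹ Φ((2ρx − ρ − s²)/s) dx` of the
piecewise-linear rule is continuous and strictly decreasing on `(0,∞)`, tends to `Φ(s)` at `0⁺`
and to `1/2` at `∞`; hence there is a unique `ρ* > 0` with `f(ρ*) = k*`. -/
theorem linear_rule_rho_exists_unique (s kstar : ℝ) (hs : 0 < s)
    (hk1 : 1 / 2 < kstar) (hk2 : kstar < Phi s)
    (f : ℝ → ℝ)
    (hf : ∀ ρ, f ρ = 1 - ∫ x in (0:ℝ)..1, Phi ((2 * ρ * x - ρ - s ^ 2) / s)) :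
    ContinuousOn f (Set.Ioi 0) ∧
    StrictAntiOn f (Set.Ioi 0) ∧
    Filter.Tendsto f (nhdsWithin 0 (Set.Ioi 0)) (nhds (Phi s)) ∧
    Filter.Tendsto f Filter.atTop (nhds (1 / 2)) ∧
    (∃! ρ : ℝ, 0 < ρ ∧ f ρ = kstar) := by
  obtain rfl : f = fun ρ ↦ 1 - linearRuleIntegral s ρ := funext hf
  have hcont : Continuous fun ρ ↦ 1 - linearRuleIntegral s ρ :=
    continuous_const.sub (continuous_linearRuleIntegral s)
  have hanti : StrictAntiOn (fun ρ ↦ 1 - linearRuleIntegral s ρ) (Ioi 0) :=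
    fun _ ha _ hb hab ↦ sub_lt_sub_left
      (strictMonoOn_linearRuleIntegral hs (Ioi_subset_Ici_self ha) (Ioi_subset_Ici_self hb) hab) 1
  have hzero : Tendsto (fun ρ ↦ 1 - linearRuleIntegral s ρ) (𝓝[>] 0) (𝓝 (Phi s)) := by
    have h := (hcont.tendsto 0).mono_left (nhdsWithin_le_nhds (s := Ioi 0))
    rwa [linearRuleIntegral_zero hs.ne', sub_sub_cancel] at h
  have hinfty : Tendsto (fun ρ ↦ 1 - linearRuleIntegral s ρ) atTop (𝓝 (1 / 2)) := by
    convert (tendsto_linearRuleIntegral_atTop hs.ne').const_sub 1 using 2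
    norm_num
  exact ⟨hcont.continuousOn, hanti, hzero, hinfty,
    hanti.existsUnique_eq_of_tendsto_Ioi hcont.continuousOn hzero hinfty hk1 hk2⟩
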